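/- Let 1 ≤ i ≤ n and let j, k be integers with j ≥ i and k ≥ i. Then τ₂(v_i, q^{j−i}, r^k) ≤ τ₂′(v_i, q^j, r^k) ≤ τ₂(v_i, q^j, r^{k−i}) (as elements of ℝ ∪ {−∞,+∞}). -/

import Mathlib

open scoped BigOperators

/-- `IsWalk src dst u v p` : the list of edges `p` forms a directed walk from `u` to `v`
in the multigraph whose edges `e` go from `src e` to `dst e`. -/
def IsWalk {V E : Type} (src dst : E → V) : V → V → List E → Prop
  | u, v, [] => u = v
  | u, v, e :: p => src e = u ∧ IsWalk src dst (dst e) v p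

/-- `tau2 src dst l l' s v a B` : the smallest threshold `L₂ ∈ ℝ` (as an element of
`ℝ ∪ {−∞, +∞}`) such that at least `a` directed `s`–`v` paths have `l`-weight at most `B`
and `l'`-weight at most `L₂`; it is `−∞` when `a ≤ 0` and `+∞` when fewer than `a`
`s`–`v` paths of `l`-weight at most `B` exist. -/
noncomputable def tau2 {V E : Type} (src dst : E → V) (l l' : E → ℝ) (s v : V)
    (a B : ℝ) : EReal :=
  sInf {x : EReal | ∃ L₂ : ℝ, x = (L₂ : EReal) ∧
    a ≤ (Nat.card {p : List E // IsWalk src dst s v p ∧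
      (p.map l).sum ≤ B ∧ (p.map l').sum ≤ L₂} : ℝ)}

/-!
Both inequalities are proved together by strong induction along the topological order. The
`s`–`v` walks within budgets `(B, L)` are counted by their last edge: their number is the sum,
over the edges `e` entering `v`, of the numbers of `s`–`src e` walks within
`(B - l e, L - l' e)`. For the lower bound, a split `α` of cost at most `L` forces, by
induction, at least `α e * q ^ (j - v.val - 1)` such walks through each edge `e`; for the upper
bound, splitting according to these counts is a feasible `α`. Rounding `q ^ (j + log_q α)` and
`r ^ log_r (r ^ k - l e)` down to integral powers loses at most one factor `q`, resp. `r`, per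
level of the topological order, whence the shifts by `v.val + 1`.
-/

open Filter Topology

section Walks

variable {V E : Type} {src dst : E → V}

theorem isWalk_append_singleton {e : E} :
    ∀ {p : List E} {u v : V},
      IsWalk src dst u v (p ++ [e]) ↔ IsWalk src dst u (src e) p ∧ dst e = v
  | [], u, v => by
    simp only [List.nil_append, IsWalk]
    exact ⟨fun ⟨h1, h2⟩ => ⟨h1.symm, h2⟩, fun ⟨h1, h2⟩ => ⟨h1.symm, h2⟩⟩
  | f :: p, u, v => by
    simp only [List.cons_append, IsWalk, isWalk_append_singleton, and_assoc]

variable {n : ℕ} {src dst : E → Fin n}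

theorem IsWalk.val_add_length_le (htopo : ∀ e, src e < dst e) :
    ∀ {p : List E} {u v : Fin n}, IsWalk src dst u v p → u.val + p.length ≤ v.val
  | [], u, v, h => by simp [show u = v from h]
  | e :: p, u, v, ⟨he, hw⟩ => by
    have hlen := hw.val_add_length_le htopo
    have hsrc := Fin.lt_def.1 (he ▸ htopo e)
    simp only [List.length_cons]
    omega

theorem IsWalk.eq_nil_of_self (htopo : ∀ e, src e < dst e) {u : Fin n} {p : List E}
    (h : IsWalk src dst u u p) : p = [] :=
  List.eq_nil_of_length_eq_zero (by have := h.val_add_length_le htopo; omega)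

theorem finite_setOf_isWalk [Finite E] (htopo : ∀ e, src e < dst e) (u v : Fin n) :
    {p : List E | IsWalk src dst u v p}.Finite :=
  (List.finite_length_le E n).subset fun p hp => by
    have := (show IsWalk src dst u v p from hp).val_add_length_le htopo
    have := v.isLt
    show p.length ≤ n
    omega

end Walks

section WalkCount

variable {V E : Type}

def boundedWalks (src dst : E → V) (l l' : E → ℝ) (s v : V) (B L : ℝ) : Set (List E) :=
  {p | IsWalk src dst s v p ∧ (p.map l).sum ≤ B ∧ (p.map l').sum ≤ L}

/-- `tau2 src dst l l' s v a B` is, by definition, the infimum of the reals `L` with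
`a ≤ walkCount src dst l l' s v B L`. -/
noncomputable def walkCount (src dst : E → V) (l l' : E → ℝ) (s v : V) (B L : ℝ) : ℕ :=
  (boundedWalks src dst l l' s v B L).ncard

variable {src dst : E → V} {l l' : E → ℝ}

theorem boundedWalks_eq_biUnion {s v : V} (hv : v ≠ s) (B L : ℝ) :
    boundedWalks src dst l l' s v B L =
      ⋃ e ∈ {e | dst e = v},
        (· ++ [e]) '' boundedWalks src dst l l' s (src e) (B - l e) (L - l' e) := by
  ext p
  simp only [boundedWalks, Set.mem_iUnion, Set.mem_image, exists_prop]
  constructor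
  · rintro ⟨hw, hB, hL⟩
    rcases p.eq_nil_or_concat' with rfl | ⟨p, e, rfl⟩
    · exact absurd (show s = v from hw).symm hv
    · simp only [List.map_append, List.map_singleton, List.sum_append, List.sum_singleton]
        at hB hL
      rw [isWalk_append_singleton] at hw
      exact ⟨e, hw.2, p, ⟨hw.1, by linarith, by linarith⟩, rfl⟩
  · rintro ⟨e, he, p, ⟨hw, hB, hL⟩, rfl⟩
    refine ⟨isWalk_append_singleton.2 ⟨hw, he⟩, ?_, ?_⟩ <;>
      simp only [List.map_append, List.map_singleton, List.sum_append, List.sum_singleton] <;>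
      linarith

theorem nonneg_of_walkCount_ne_zero (hl : ∀ e, 0 ≤ l e) {s v : V} {B L : ℝ}
    (h : walkCount src dst l l' s v B L ≠ 0) : 0 ≤ B := by
  obtain ⟨p, -, hB, -⟩ := Set.nonempty_of_ncard_ne_zero h
  exact (List.sum_nonneg fun x hx => by
    obtain ⟨e, -, rfl⟩ := List.mem_map.1 hx
    exact hl e).trans hB

variable {n : ℕ} {src dst : E → Fin n}

theorem finite_boundedWalks [Finite E] (htopo : ∀ e, src e < dst e) (s v : Fin n) (B L : ℝ) :
    (boundedWalks src dst l l' s v B L).Finite :=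
  (finite_setOf_isWalk htopo s v).subset fun _ hp => hp.1

theorem walkCount_mono [Finite E] (htopo : ∀ e, src e < dst e) (s v : Fin n) {B B' L L' : ℝ}
    (hB : B ≤ B') (hL : L ≤ L') :
    walkCount src dst l l' s v B L ≤ walkCount src dst l l' s v B' L' :=
  Set.ncard_le_ncard (fun _ hp => ⟨hp.1, hp.2.1.trans hB, hp.2.2.trans hL⟩)
    (finite_boundedWalks htopo s v B' L')

theorem walkCount_self (htopo : ∀ e, src e < dst e) (s : Fin n) (B L : ℝ) :
    walkCount src dst l l' s s B L = if 0 ≤ B ∧ 0 ≤ L then 1 else 0 := by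
  have hwalks : boundedWalks src dst l l' s s B L = {p | p = [] ∧ 0 ≤ B ∧ 0 ≤ L} := by
    ext p
    constructor
    · rintro ⟨hw, hB, hL⟩
      obtain rfl := hw.eq_nil_of_self htopo
      exact ⟨rfl, by simpa using hB, by simpa using hL⟩
    · rintro ⟨rfl, hB, hL⟩
      exact ⟨rfl, by simpa using hB, by simpa using hL⟩
  rw [walkCount, hwalks]
  split_ifs with h <;> simp [h]

theorem walkCount_eq_sum [Fintype E] (htopo : ∀ e, src e < dst e) {s v : Fin n} (hv : v ≠ s)
    (B L : ℝ) :
    walkCount src dst l l' s v B L =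
      ∑ e ∈ Finset.univ.filter (fun e => dst e = v),
        walkCount src dst l l' s (src e) (B - l e) (L - l' e) := by
  rw [walkCount, boundedWalks_eq_biUnion hv,
    show {e | dst e = v} = ↑(Finset.univ.filter fun e => dst e = v) by ext; simp,
    Set.Finite.ncard_biUnion (Finset.finite_toSet _), finsum_mem_coe_finset]
  · exact Finset.sum_congr rfl fun e _ =>
      Set.ncard_image_of_injective _ (List.append_left_injective [e])
  · exact fun e _ => (finite_boundedWalks htopo _ _ _ _).image _
  · rintro e - e' - hne
    rw [Function.onFun, Set.disjoint_left]
    rintro _ ⟨p, -, rfl⟩ ⟨p', -, h⟩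
    exact hne (List.singleton_inj.1 (List.append_inj' h rfl).2).symm

end WalkCount

section Tau2

variable {V E : Type} {src dst : E → V} {l l' : E → ℝ} {s v : V} {a B : ℝ}

theorem tau2_le_coe_of_le_walkCount {L : ℝ} (h : a ≤ walkCount src dst l l' s v B L) :
    tau2 src dst l l' s v a B ≤ L :=
  sInf_le ⟨L, rfl, h⟩

theorem le_tau2_iff {x : EReal} :
    x ≤ tau2 src dst l l' s v a B ↔
      ∀ L : ℝ, a ≤ walkCount src dst l l' s v B L → x ≤ L :=
  ⟨fun h _ hL => h.trans (tau2_le_coe_of_le_walkCount hL),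
    fun h => le_sInf fun _ ⟨L, hx, hL⟩ => hx ▸ h L hL⟩

variable {n : ℕ} {src dst : E → Fin n} {s v : Fin n}

/-- There are finitely many walks, so no walk weight lies just above `c`; this makes the
infimum defining `tau2` attained. -/
theorem exists_gt_forall_walk_le [Finite E] (htopo : ∀ e, src e < dst e) (s v : Fin n) (c : ℝ) :
    ∃ L > c, ∀ p, IsWalk src dst s v p → (p.map l').sum < L → (p.map l').sum ≤ c := by
  have hev : ∀ᶠ L in 𝓝 c, ∀ p ∈ {p | IsWalk src dst s v p},
      c < (p.map l').sum → L < (p.map l').sum :=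
    (finite_setOf_isWalk htopo s v).eventually_all.2 fun _ _ =>
      eventually_imp_distrib_left.2 eventually_lt_nhds
  obtain ⟨L, hL, hcL⟩ := ((hev.filter_mono nhdsWithin_le_nhds).and self_mem_nhdsWithin).exists
    (f := 𝓝[>] c)
  exact ⟨L, hcL, fun p hp hpL => not_lt.1 fun hc => (hL p hp hc).not_gt hpL⟩

theorem tau2_le_coe_iff [Finite E] (htopo : ∀ e, src e < dst e) {c : ℝ} :
    tau2 src dst l l' s v a B ≤ c ↔ a ≤ walkCount src dst l l' s v B c := by
  refine ⟨fun h => ?_, tau2_le_coe_of_le_walkCount⟩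
  obtain ⟨L, hcL, hgap⟩ := exists_gt_forall_walk_le (l' := l') htopo s v c
  obtain ⟨_, ⟨L₂, rfl, hL₂⟩, hlt⟩ :=
    sInf_lt_iff.1 (h.trans_lt (EReal.coe_lt_coe_iff.2 hcL))
  refine hL₂.trans (Nat.cast_le.2 (Set.ncard_le_ncard ?_ (finite_boundedWalks htopo s v B c)))
  exact fun p ⟨hw, hB, hL⟩ => ⟨hw, hB, hgap p hw (hL.trans_lt (EReal.coe_lt_coe_iff.1 hlt))⟩

theorem tau2_self (htopo : ∀ e, src e < dst e) (ha : 0 < a) (hB : 0 ≤ B) :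
    tau2 src dst l l' s s a B = if a ≤ 1 then 0 else ⊤ := by
  split_ifs with h
  · refine le_antisymm ?_ (le_tau2_iff.2 fun L hL => ?_)
    · simpa using tau2_le_coe_of_le_walkCount (L := 0) (by simpa [walkCount_self htopo, hB])
    · rw [walkCount_self htopo] at hL
      split_ifs at hL with hBL
      · exact EReal.coe_nonneg.2 hBL.2
      · simp only [CharP.cast_eq_zero] at hL
        linarith
  · refine eq_top_iff.2 (le_tau2_iff.2 fun L hL => absurd hL ?_)
    rw [walkCount_self htopo]
    split_ifs <;> simp only [Nat.cast_one, CharP.cast_eq_zero, not_le] <;> linarith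

end Tau2

section FloorLogb

open Real

variable {b x : ℝ}

theorem zpow_floor_logb_le (hb : 1 < b) (hx : 0 < x) : b ^ ⌊logb b x⌋ ≤ x := by
  rw [← rpow_intCast, ← le_logb_iff_rpow_le hb hx]
  exact Int.floor_le _

theorem lt_zpow_floor_logb_add_one (hb : 1 < b) (hx : 0 < x) : x < b ^ (⌊logb b x⌋ + 1) := by
  rw [← rpow_intCast, ← logb_lt_iff_lt_rpow hb hx]
  push_cast
  exact Int.lt_floor_add_one _

theorem zpow_floor_intCast_add_logb_le (hb : 1 < b) (hx : 0 < x) (j : ℤ) :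
    b ^ ⌊(j : ℝ) + logb b x⌋ ≤ b ^ j * x := by
  rw [Int.floor_intCast_add, zpow_add₀ (by positivity)]
  exact mul_le_mul_of_nonneg_left (zpow_floor_logb_le hb hx) (by positivity)

theorem mul_zpow_le_zpow_floor_intCast_add_logb (hb : 1 < b) (hx : 0 < x) {i i' : ℤ}
    (hi : i' + 1 ≤ i) (j : ℤ) : x * b ^ (j - i) ≤ b ^ (⌊(j : ℝ) + logb b x⌋ - i') := by
  have hb0 : 0 < b := by positivity
  calc x * b ^ (j - i) ≤ x * b ^ (j - i' - 1) :=
        mul_le_mul_of_nonneg_left (zpow_le_zpow_right₀ hb.le (by omega)) hx.le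
    _ ≤ b ^ (⌊logb b x⌋ + 1) * b ^ (j - i' - 1) :=
        mul_le_mul_of_nonneg_right (lt_zpow_floor_logb_add_one hb hx).le (by positivity)
    _ = b ^ (⌊(j : ℝ) + logb b x⌋ - i') := by
        rw [← zpow_add₀ hb0.ne', Int.floor_intCast_add]
        ring_nf

theorem zpow_sub_sub_le_zpow_floor_logb_sub (hb : 1 < b) {c : ℝ} (hc : 0 ≤ c) {k : ℤ}
    (hpos : 0 < b ^ k - c) {i i' : ℤ} (hi : i' + 1 ≤ i) (hi0 : 0 ≤ i) :
    b ^ (k - i) - c ≤ b ^ (⌊logb b (b ^ k - c)⌋ - i') := by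
  have hb0 : 0 < b := by positivity
  calc b ^ (k - i) - c ≤ b ^ (k - i) - c * b ^ (-i) := by
        gcongr
        exact mul_le_of_le_one_right hc (zpow_le_one_of_nonpos₀ hb.le (by omega))
    _ = (b ^ k - c) * b ^ (-i) := by rw [sub_mul, ← zpow_add₀ hb0.ne', ← sub_eq_add_neg]
    _ ≤ b ^ (⌊logb b (b ^ k - c)⌋ + 1) * b ^ (-i) :=
        mul_le_mul_of_nonneg_right (lt_zpow_floor_logb_add_one hb hpos).le (by positivity)
    _ ≤ b ^ (⌊logb b (b ^ k - c)⌋ - i') := by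
        rw [← zpow_add₀ hb0.ne']
        exact zpow_le_zpow_right₀ hb.le (by omega)

end FloorLogb

section Recursion

variable {n : ℕ} {E : Type}

noncomputable def splitCost (src : E → Fin n) (l l' : E → ℝ) (q r : ℝ)
    (T : Fin n → ℝ → ℝ → EReal) (e : E) (α : ℝ) (j k : ℤ) : EReal :=
  if α = 0 then ⊥
  else if r ^ k - l e ≤ 0 then ⊤
  else T (src e) (q ^ ⌊(j : ℝ) + Real.logb q α⌋) (r ^ ⌊Real.logb r (r ^ k - l e)⌋) +
    (l' e : EReal)

variable [Fintype E]

/-- The right-hand side of the recursion defining `τ₂′`. -/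
noncomputable def minSplitCost (src dst : E → Fin n) (l l' : E → ℝ) (q r : ℝ)
    (T : Fin n → ℝ → ℝ → EReal) (v : Fin n) (j k : ℤ) : EReal :=
  sInf {x : EReal | ∃ α : E → ℝ, (∀ e, dst e = v → 0 ≤ α e) ∧
    (∑ e ∈ Finset.univ.filter (fun e => dst e = v), α e) = 1 ∧
    x = (Finset.univ.filter (fun e => dst e = v)).sup
      (fun e => splitCost src l l' q r T e (α e) j k)}

variable {src dst : E → Fin n} {l l' : E → ℝ} {q r : ℝ} {T : Fin n → ℝ → ℝ → EReal}
  {s v : Fin n} {e : E}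

theorem mul_zpow_le_walkCount_of_splitCost_le (htopo : ∀ e, src e < dst e) (hq : 1 < q)
    (hr : 1 < r)
    (IH : ∀ j k : ℤ, tau2 src dst l l' s (src e) (q ^ (j - ((src e).val + 1))) (r ^ k) ≤
      T (src e) (q ^ j) (r ^ k))
    (he : dst e = v) {α : ℝ} (hα : 0 ≤ α) {j k : ℤ} {L : ℝ}
    (h : splitCost src l l' q r T e α j k ≤ L) :
    α * q ^ (j - ((v.val : ℤ) + 1)) ≤
      walkCount src dst l l' s (src e) (r ^ k - l e) (L - l' e) := by
  rcases hα.eq_or_lt with rfl | hα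
  · simp
  have hk : 0 < r ^ k - l e := by
    by_contra hk
    rw [splitCost, if_neg hα.ne', if_pos (not_lt.1 hk)] at h
    exact EReal.coe_ne_top L (top_le_iff.1 h)
  rw [splitCost, if_neg hα.ne', if_neg hk.not_ge,
    ← EReal.le_sub_iff_add_le (.inl (EReal.coe_ne_bot _)) (.inl (EReal.coe_ne_top _)),
    ← EReal.coe_sub] at h
  have hcount := (tau2_le_coe_iff htopo).1 ((IH _ _).trans h)
  have hsrc := Fin.lt_def.1 (he ▸ htopo e)
  calc α * q ^ (j - ((v.val : ℤ) + 1))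
      ≤ q ^ (⌊(j : ℝ) + Real.logb q α⌋ - ((src e).val + 1)) :=
        mul_zpow_le_zpow_floor_intCast_add_logb hq hα (by omega) j
    _ ≤ _ := hcount
    _ ≤ _ := Nat.cast_le.2 (walkCount_mono htopo _ _ (zpow_floor_logb_le hr hk) le_rfl)

theorem tau2_le_minSplitCost (htopo : ∀ e, src e < dst e) (hq : 1 < q) (hr : 1 < r)
    (hv : v ≠ s)
    (IH : ∀ e, dst e = v → ∀ j k : ℤ,
      tau2 src dst l l' s (src e) (q ^ (j - ((src e).val + 1))) (r ^ k) ≤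
        T (src e) (q ^ j) (r ^ k))
    (j k : ℤ) :
    tau2 src dst l l' s v (q ^ (j - ((v.val : ℤ) + 1))) (r ^ k) ≤
      minSplitCost src dst l l' q r T v j k := by
  refine le_sInf ?_
  rintro _ ⟨α, hα0, hα1, rfl⟩
  refine EReal.le_of_forall_lt_iff_le.1 fun L hL => tau2_le_coe_of_le_walkCount ?_
  rw [walkCount_eq_sum htopo hv, Nat.cast_sum, ← one_mul (q ^ _), ← hα1, Finset.sum_mul]
  refine Finset.sum_le_sum fun e he => ?_
  have he' := (Finset.mem_filter.1 he).2
  exact mul_zpow_le_walkCount_of_splitCost_le htopo hq hr (IH e he') he' (hα0 e he')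
    ((Finset.le_sup he).trans hL.le)

theorem splitCost_le_of_mul_zpow_le_walkCount (htopo : ∀ e, src e < dst e) (hl : ∀ e, 0 ≤ l e)
    (hq : 1 < q) (hr : 1 < r)
    (IH : ∀ j k : ℤ, T (src e) (q ^ j) (r ^ k) ≤
      tau2 src dst l l' s (src e) (q ^ j) (r ^ (k - ((src e).val + 1))))
    (he : dst e = v) {α : ℝ} (hα : 0 < α) {j k : ℤ} {L : ℝ}
    (h : α * q ^ j ≤
      walkCount src dst l l' s (src e) (r ^ (k - ((v.val : ℤ) + 1)) - l e) (L - l' e)) :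
    splitCost src l l' q r T e α j k ≤ L := by
  have hcount : walkCount src dst l l' s (src e) (r ^ (k - ((v.val : ℤ) + 1)) - l e)
      (L - l' e) ≠ 0 := fun h0 => by
    have : 0 < α * q ^ j := mul_pos hα (zpow_pos (by positivity) j)
    simp only [h0, CharP.cast_eq_zero] at h
    linarith
  have hk : 0 < r ^ k - l e := by
    have := nonneg_of_walkCount_ne_zero hl hcount
    have : r ^ (k - ((v.val : ℤ) + 1)) < r ^ k := zpow_lt_zpow_right₀ hr (by omega)
    linarith
  have hsrc := Fin.lt_def.1 (he ▸ htopo e)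
  have hcount' : q ^ ⌊(j : ℝ) + Real.logb q α⌋ ≤ walkCount src dst l l' s (src e)
      (r ^ (⌊Real.logb r (r ^ k - l e)⌋ - ((src e).val + 1))) (L - l' e) :=
    calc q ^ ⌊(j : ℝ) + Real.logb q α⌋
        ≤ q ^ j * α := zpow_floor_intCast_add_logb_le hq hα j
      _ ≤ _ := by rwa [mul_comm]
      _ ≤ _ := Nat.cast_le.2 (walkCount_mono htopo _ _
        (zpow_sub_sub_le_zpow_floor_logb_sub hr (hl e) hk (by omega) (by omega)) le_rfl)
  rw [splitCost, if_neg hα.ne', if_neg hk.not_ge]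
  calc _ ≤ ((L - l' e : ℝ) : EReal) + l' e :=
        add_le_add_left ((IH _ _).trans (tau2_le_coe_of_le_walkCount hcount')) _
    _ = L := by rw [← EReal.coe_add, sub_add_cancel]

theorem minSplitCost_le_tau2 (htopo : ∀ e, src e < dst e) (hl : ∀ e, 0 ≤ l e) (hq : 1 < q)
    (hr : 1 < r) (hv : v ≠ s)
    (IH : ∀ e, dst e = v → ∀ j k : ℤ, T (src e) (q ^ j) (r ^ k) ≤
      tau2 src dst l l' s (src e) (q ^ j) (r ^ (k - ((src e).val + 1))))
    (j k : ℤ) :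
    minSplitCost src dst l l' q r T v j k ≤
      tau2 src dst l l' s v (q ^ j) (r ^ (k - ((v.val : ℤ) + 1))) := by
  refine le_tau2_iff.2 fun L hL => ?_
  set B := r ^ (k - ((v.val : ℤ) + 1))
  have hN : (0 : ℝ) < walkCount src dst l l' s v B L := (zpow_pos (by positivity) j).trans_le hL
  set α : E → ℝ := fun e =>
    (walkCount src dst l l' s (src e) (B - l e) (L - l' e) : ℝ) / walkCount src dst l l' s v B L
  have hα1 : ∑ e ∈ Finset.univ.filter (fun e => dst e = v), α e = 1 := by
    rw [← Finset.sum_div, ← Nat.cast_sum, ← walkCount_eq_sum htopo hv, div_self hN.ne']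
  refine le_trans (sInf_le ⟨α, fun e _ => by positivity, hα1, rfl⟩)
    (Finset.sup_le fun e he => ?_)
  rcases (show 0 ≤ α e by positivity).eq_or_lt with h0 | hα
  · simp [splitCost, ← h0]
  refine splitCost_le_of_mul_zpow_le_walkCount htopo hl hq hr (IH e (Finset.mem_filter.1 he).2)
    (Finset.mem_filter.1 he).2 hα ?_
  rw [div_mul_eq_mul_div, div_le_iff₀ hN]
  exact mul_le_mul_of_nonneg_left hL (Nat.cast_nonneg _)

end Recursion

theorem tau2_self_bounds {n : ℕ} {E : Type} {src dst : E → Fin n} {l l' : E → ℝ}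
    (htopo : ∀ e, src e < dst e) {q r : ℝ} (hq : 1 < q) (hr : 1 < r) (s : Fin n) {j k : ℤ}
    {x : EReal} (hx0 : q ^ j ≤ 1 → x = 0) (hxtop : 1 < q ^ j → x = ⊤) :
    tau2 src dst l l' s s (q ^ (j - 1)) (r ^ k) ≤ x ∧
      x ≤ tau2 src dst l l' s s (q ^ j) (r ^ (k - 1)) := by
  have hq0 : 0 < q := by positivity
  have hr0 : 0 < r := by positivity
  rw [tau2_self htopo (zpow_pos hq0 _) (zpow_pos hr0 _).le,
    tau2_self htopo (zpow_pos hq0 _) (zpow_pos hr0 _).le]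
  rcases le_or_gt (q ^ j) 1 with hj | hj
  · have hj' : q ^ (j - 1) ≤ 1 := (zpow_le_zpow_right₀ hq.le (by omega)).trans hj
    rw [hx0 hj, if_pos hj, if_pos hj']
    exact ⟨le_rfl, le_rfl⟩
  · rw [hxtop hj, if_neg hj.not_ge]
    exact ⟨le_top, le_rfl⟩

theorem stmt2_general
    {n : ℕ} (hn : 0 < n) {E : Type} [Fintype E]
    (src dst : E → Fin n) (l l' : E → ℝ)
    (htopo : ∀ e, src e < dst e)
    (hlnonneg : ∀ e, 0 ≤ l e)
    (q r : ℝ) (hq : 1 < q) (hr : 1 < r)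
    (T2 : Fin n → ℝ → ℝ → EReal)
    (hTs1 : ∀ a x : ℝ, 0 < a → a ≤ 1 → 0 < x → T2 ⟨0, hn⟩ a x = 0)
    (hTs2 : ∀ a x : ℝ, 1 < a → 0 < x → T2 ⟨0, hn⟩ a x = ⊤)
    (hTrec : ∀ v : Fin n, v ≠ ⟨0, hn⟩ → ∀ j k : ℤ,
      T2 v (q ^ j) (r ^ k) = sInf {x : EReal |
        ∃ α : E → ℝ, (∀ e, dst e = v → 0 ≤ α e) ∧
          (∑ e ∈ Finset.univ.filter (fun e => dst e = v), α e) = 1 ∧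
          x = (Finset.univ.filter (fun e => dst e = v)).sup
            (fun e =>
              if α e = 0 then (⊥ : EReal)
              else if r ^ k - l e ≤ 0 then (⊤ : EReal)
              else T2 (src e) (q ^ ⌊(j : ℝ) + Real.logb q (α e)⌋)
                (r ^ ⌊Real.logb r (r ^ k - l e)⌋) + (l' e : EReal))})
    (v : Fin n) (j k : ℤ) :
    tau2 src dst l l' ⟨0, hn⟩ v (q ^ (j - ((v.val : ℤ) + 1))) (r ^ k) ≤ T2 v (q ^ j) (r ^ k) ∧
      T2 v (q ^ j) (r ^ k) ≤ tau2 src dst l l' ⟨0, hn⟩ v (q ^ j) (r ^ (k - ((v.val : ℤ) + 1))) := by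
  induction v using WellFoundedLT.induction generalizing j k with
  | _ v IH =>
    by_cases hv : v = ⟨0, hn⟩
    · subst hv
      simpa using tau2_self_bounds htopo hq hr ⟨0, hn⟩ (l := l) (l' := l')
        (fun h => hTs1 _ _ (zpow_pos (by positivity) j) h (zpow_pos (by positivity) k))
        (fun h => hTs2 _ _ h (zpow_pos (by positivity) k))
    have hsrc : ∀ e, dst e = v → src e < v := fun e he => he ▸ htopo e
    rw [hTrec v hv j k]
    exact ⟨tau2_le_minSplitCost htopo hq hr hv (fun e he j k => (IH _ (hsrc e he) j k).1) j k,
      minSplitCost_le_tau2 htopo hlnonneg hq hr hv (fun e he j k => (IH _ (hsrc e he) j k).2) j k⟩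

theorem stmt2
    {n : ℕ} (hn : 0 < n) {E : Type} [Fintype E]
    (src dst : E → Fin n) (l l' : E → ℝ)
    (htopo : ∀ e, src e < dst e)
    (hin : ∀ v : Fin n, v ≠ ⟨0, hn⟩ → ∃ e, dst e = v)
    (hlnonneg : ∀ e, 0 ≤ l e)
    (q r : ℝ) (hq : 1 < q) (hr : 1 < r)
    (T2 : Fin n → ℝ → ℝ → EReal)
    (hT0 : ∀ v : Fin n, ∀ x : ℝ, T2 v 0 x = ⊥)
    (hTs1 : ∀ a x : ℝ, 0 < a → a ≤ 1 → 0 < x → T2 ⟨0, hn⟩ a x = 0)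
    (hTs2 : ∀ a x : ℝ, 1 < a → 0 < x → T2 ⟨0, hn⟩ a x = ⊤)
    (hTrec : ∀ v : Fin n, v ≠ ⟨0, hn⟩ → ∀ j k : ℤ,
      T2 v (q ^ j) (r ^ k) = sInf {x : EReal |
        ∃ α : E → ℝ, (∀ e, dst e = v → 0 ≤ α e) ∧
          (∑ e ∈ Finset.univ.filter (fun e => dst e = v), α e) = 1 ∧
          x = (Finset.univ.filter (fun e => dst e = v)).sup
            (fun e =>
              if α e = 0 then (⊥ : EReal)
              else if r ^ k - l e ≤ 0 then (⊤ : EReal)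
              else T2 (src e) (q ^ ⌊(j : ℝ) + Real.logb q (α e)⌋)
                (r ^ ⌊Real.logb r (r ^ k - l e)⌋) + (l' e : EReal))})
    (v : Fin n) (j k : ℤ)
    (hj : (v.val : ℤ) + 1 ≤ j) (hk : (v.val : ℤ) + 1 ≤ k) :
    tau2 src dst l l' ⟨0, hn⟩ v (q ^ (j - ((v.val : ℤ) + 1))) (r ^ k) ≤ T2 v (q ^ j) (r ^ k) ∧
      T2 v (q ^ j) (r ^ k) ≤ tau2 src dst l l' ⟨0, hn⟩ v (q ^ j) (r ^ (k - ((v.val : ℤ) + 1))) :=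
  stmt2_general hn src dst l l' htopo hlnonneg q r hq hr T2 hTs1 hTs2 hTrec v j k
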